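/- Let N be a positive natural number, let η be the 2N×2N complex matrix η = diag(1_N, −1_N), and let H be a 2N×2N Hermitian positive definite complex matrix. Then there exists a 2N×2N complex matrix P with P η P† = η (a para-unitary matrix) such that P† H P is a diagonal matrix all of whose diagonal entries are real and strictly positive. -/

import Mathlib

/-!
Write `H = Kᴴ K` with `K` invertible. The Hermitian matrix `K η Kᴴ` is congruent to `η`, so by
Sylvester's law of inertia it has exactly `N` positive and `N` negative eigenvalues; ordering a
unitary eigenbasis accordingly gives `K η Kᴴ = V D Vᴴ` with `D = diag μ`, `μ > 0` on the first
block and `μ < 0` on the second. For `G = |D|^{1/2}` one has `G η G = D`, hence `P = K⁻¹ V G`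
satisfies `P η Pᴴ = K⁻¹ (K η Kᴴ) K⁻ᴴ = η` and `Pᴴ H P = G Vᴴ V G = |D|`.

Inertia is a dimension count: if `B diag d Bᴴ = C diag e Cᴴ` with `C` invertible, the Hermitian
form of this matrix is `≥ 0` on the subspace where `Bᴴ v` vanishes at the negative entries of `d`
(codimension `≤ #{d < 0}`) and `< 0` off zero on the subspace where `Cᴴ v` vanishes at the
nonnegative entries of `e` (dimension `#{e < 0}`); the two subspaces meet only in `0`.
-/

open Matrix
open scoped ComplexOrder

section

variable {ι E : Type*} [Fintype ι] [NormedAddCommGroup E]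

theorem sum_mul_norm_sq_nonneg {d : ι → ℝ} {w : ι → E} (hw : ∀ i, d i < 0 → w i = 0) :
    0 ≤ ∑ i, d i * ‖w i‖ ^ 2 :=
  Finset.sum_nonneg fun i _ => by
    by_cases hi : d i < 0
    · simp [hw i hi]
    · exact mul_nonneg (not_lt.mp hi) (sq_nonneg _)

theorem sum_mul_norm_sq_neg {d : ι → ℝ} {w : ι → E} (hw : ∀ i, ¬ d i < 0 → w i = 0)
    (hw₀ : w ≠ 0) : ∑ i, d i * ‖w i‖ ^ 2 < 0 := by
  obtain ⟨i₀, hi₀⟩ := Function.ne_iff.mp hw₀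
  have hd : d i₀ < 0 := not_not.mp (mt (hw i₀) hi₀)
  refine Finset.sum_neg' (fun i _ => ?_) ⟨i₀, Finset.mem_univ _, ?_⟩
  · by_cases hi : d i < 0
    · exact mul_nonpos_of_nonpos_of_nonneg hi.le (sq_nonneg _)
    · simp [hw i hi]
  · exact mul_neg_of_neg_of_pos hd (pow_pos (norm_pos_iff.mpr hi₀) 2)

end

namespace Matrix

variable {m n ι 𝕜 : Type*} [Fintype m] [Fintype n] [Fintype ι] [RCLike 𝕜]

theorem card_le_finrank_ker_mulVecLin_add_card {K : Type*} [Field K] (A : Matrix n m K) :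
    Fintype.card m ≤ Module.finrank K (LinearMap.ker A.mulVecLin) + Fintype.card n := by
  have h := LinearMap.finrank_range_add_finrank_ker A.mulVecLin
  rw [Module.finrank_fintype_fun_eq_card] at h
  have := A.rank_le_card_height
  rw [rank] at this
  omega

variable [DecidableEq ι]

theorem star_dotProduct_mul_diagonal_mul_conjTranspose_mulVec (B : Matrix m ι 𝕜) (d : ι → ℝ)
    (v : m → 𝕜) :
    star v ⬝ᵥ ((B * diagonal (RCLike.ofReal ∘ d : ι → 𝕜) * Bᴴ) *ᵥ v)
      = ((∑ i, d i * ‖(Bᴴ *ᵥ v) i‖ ^ 2 : ℝ) : 𝕜) := by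
  have hrow : star v ᵥ* B = star (Bᴴ *ᵥ v) := by rw [star_mulVec, conjTranspose_conjTranspose]
  rw [← mulVec_mulVec, ← mulVec_mulVec, dotProduct_mulVec, hrow]
  simp only [dotProduct, mulVec_diagonal, Pi.star_apply, RCLike.star_def, Function.comp_apply,
    RCLike.ofReal_sum, RCLike.ofReal_mul, RCLike.ofReal_pow]
  refine Finset.sum_congr rfl fun i _ => ?_
  rw [mul_left_comm, RCLike.conj_mul]

variable [DecidableEq m]

theorem card_neg_le_of_mul_diagonal_mul_conjTranspose_eq {B : Matrix m ι 𝕜} {C : Matrix m m 𝕜}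
    {d : ι → ℝ} {e : m → ℝ} (hC : IsUnit C)
    (h : B * diagonal (RCLike.ofReal ∘ d : ι → 𝕜) * Bᴴ
      = C * diagonal (RCLike.ofReal ∘ e : m → 𝕜) * Cᴴ) :
    Fintype.card {j // e j < 0} ≤ Fintype.card {i // d i < 0} := by
  set W₁ := LinearMap.ker (Bᴴ.submatrix (Subtype.val : {i // d i < 0} → ι) id).mulVecLin
  set W₂ := LinearMap.ker (Cᴴ.submatrix (Subtype.val : {j // ¬ e j < 0} → m) id).mulVecLin
  have hCinj : Function.Injective Cᴴ.mulVec :=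
    mulVec_injective_iff_isUnit.mpr (by simpa using hC.star)
  have hdisj : Disjoint W₁ W₂ := by
    rw [Submodule.disjoint_def]
    intro v hv₁ hv₂
    by_contra hv
    have hform := congrArg (fun M => star v ⬝ᵥ (M *ᵥ v)) h
    simp only [star_dotProduct_mul_diagonal_mul_conjTranspose_mulVec, RCLike.ofReal_inj] at hform
    have hnonneg := sum_mul_norm_sq_nonneg (w := Bᴴ *ᵥ v) fun i hi => congrFun hv₁ ⟨i, hi⟩
    have hneg := sum_mul_norm_sq_neg (w := Cᴴ *ᵥ v) (fun j hj => congrFun hv₂ ⟨j, hj⟩)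
      fun h0 => hv (hCinj (h0.trans (mulVec_zero _).symm))
    linarith
  have h₁ : Fintype.card m ≤ Module.finrank 𝕜 W₁ + _ := card_le_finrank_ker_mulVecLin_add_card _
  have h₂ : Fintype.card m ≤ Module.finrank 𝕜 W₂ + _ := card_le_finrank_ker_mulVecLin_add_card _
  have h₁₂ := Submodule.finrank_add_finrank_le_of_disjoint hdisj
  rw [Module.finrank_fintype_fun_eq_card] at h₁₂
  rw [Fintype.card_subtype_compl] at h₂
  have := Fintype.card_subtype_le (fun j => e j < 0)
  omega

theorem card_pos_le_of_mul_diagonal_mul_conjTranspose_eq {B : Matrix m ι 𝕜} {C : Matrix m m 𝕜}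
    {d : ι → ℝ} {e : m → ℝ} (hC : IsUnit C)
    (h : B * diagonal (RCLike.ofReal ∘ d : ι → 𝕜) * Bᴴ
      = C * diagonal (RCLike.ofReal ∘ e : m → 𝕜) * Cᴴ) :
    Fintype.card {j // 0 < e j} ≤ Fintype.card {i // 0 < d i} := by
  have h' : B * diagonal (RCLike.ofReal ∘ (-d) : ι → 𝕜) * Bᴴ
      = C * diagonal (RCLike.ofReal ∘ (-e) : m → 𝕜) * Cᴴ := by
    have hd : diagonal (RCLike.ofReal ∘ (-d) : ι → 𝕜) = -diagonal (RCLike.ofReal ∘ d) := by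
      rw [diagonal_neg]; congr 1; ext; simp
    have he : diagonal (RCLike.ofReal ∘ (-e) : m → 𝕜) = -diagonal (RCLike.ofReal ∘ e) := by
      rw [diagonal_neg]; congr 1; ext; simp
    rw [hd, he, Matrix.mul_neg, Matrix.neg_mul, Matrix.mul_neg, Matrix.neg_mul, h]
  simpa using card_neg_le_of_mul_diagonal_mul_conjTranspose_eq hC h'

end Matrix

theorem exists_sum_equiv_of_card_le {α β ι : Type*} [Fintype α] [Fintype β] [Fintype ι]
    {p q : ι → Prop} [DecidablePred p] [DecidablePred q] (hpq : ∀ i, p i → ¬ q i)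
    (hι : Fintype.card ι = Fintype.card α + Fintype.card β)
    (hα : Fintype.card α ≤ Fintype.card {i // p i})
    (hβ : Fintype.card β ≤ Fintype.card {i // q i}) :
    ∃ σ : α ⊕ β ≃ ι, (∀ a, p (σ (.inl a))) ∧ ∀ b, q (σ (.inr b)) := by
  obtain ⟨f⟩ := Function.Embedding.nonempty_of_card_le hα
  obtain ⟨g⟩ := Function.Embedding.nonempty_of_card_le hβ
  have hinj : Function.Injective (Sum.elim (fun a => (f a : ι)) fun b => (g b : ι)) :=
    (Subtype.val_injective.comp f.injective).sumElim (Subtype.val_injective.comp g.injective)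
      fun a b hab => hpq _ (f a).2 (by simpa [← hab] using (g b).2)
  have hbij := (Fintype.bijective_iff_injective_and_card _).mpr ⟨hinj, by rw [Fintype.card_sum, hι]⟩
  exact ⟨Equiv.ofBijective _ hbij, fun a => (f a).2, fun b => (g b).2⟩

namespace Matrix

section

variable {l m n R : Type*} [Fintype n] [DecidableEq n] [CommRing R] [StarRing R]

theorem submatrix_id_mem_unitaryGroup {U : Matrix n n R} (hU : U ∈ unitaryGroup n R)
    (σ : Equiv.Perm n) : U.submatrix id σ ∈ unitaryGroup n R := by
  rw [mem_unitaryGroup_iff', star_eq_conjTranspose, conjTranspose_submatrix,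
    ← submatrix_mul _ _ _ _ _ Function.bijective_id, ← star_eq_conjTranspose,
    Unitary.star_mul_self_of_mem hU, submatrix_one_equiv]

theorem submatrix_id_mul_diagonal_mul_conjTranspose [Fintype l] [DecidableEq l]
    (U : Matrix m n R) (d : n → R) (σ : l ≃ n) :
    U.submatrix id σ * diagonal (d ∘ σ) * (U.submatrix id σ)ᴴ = U * diagonal d * Uᴴ := by
  rw [← submatrix_diagonal_equiv, conjTranspose_submatrix, ← submatrix_mul _ _ _ _ _ σ.bijective,
    ← submatrix_mul _ _ _ _ _ σ.bijective, submatrix_id_id]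

end

variable {n 𝕜 : Type*} [Fintype n] [DecidableEq n] [RCLike 𝕜]

theorem PosDef.exists_isUnit_eq_conjTranspose_mul {A : Matrix n n 𝕜} (hA : A.PosDef) :
    ∃ B : Matrix n n 𝕜, IsUnit B ∧ A = Bᴴ * B := by
  open scoped MatrixOrder Matrix.Norms.L2Operator in
  obtain ⟨B, hB, hBsa, rfl⟩ :=
    CStarAlgebra.isStrictlyPositive_iff_exists_isUnit_and_isSelfAdjoint_and_eq_mul_self.mp
      hA.isStrictlyPositive
  exact ⟨B, hB, by rw [← star_eq_conjTranspose, hBsa.star_eq]⟩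

variable {α β : Type*} [DecidableEq α] [DecidableEq β]

theorem fromBlocks_one_zero_zero_neg_one :
    (fromBlocks 1 0 0 (-1) : Matrix (α ⊕ β) (α ⊕ β) 𝕜)
      = diagonal (RCLike.ofReal ∘ Sum.elim 1 (-1)) := by
  rw [← diagonal_one, ← diagonal_one, diagonal_neg, fromBlocks_diagonal]
  congr 1
  ext (a | b) <;> simp

variable [Fintype α] [Fintype β]

theorem exists_unitary_diagonal_eq_mul_fromBlocks_mul_conjTranspose
    {C : Matrix (α ⊕ β) (α ⊕ β) 𝕜} (hC : IsUnit C) :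
    ∃ V ∈ unitaryGroup (α ⊕ β) 𝕜, ∃ μ : α ⊕ β → ℝ,
      (∀ a, 0 < μ (.inl a)) ∧ (∀ b, μ (.inr b) < 0) ∧
      C * fromBlocks 1 0 0 (-1) * Cᴴ = V * diagonal (RCLike.ofReal ∘ μ) * Vᴴ := by
  rw [fromBlocks_one_zero_zero_neg_one]
  have hM : (C * diagonal (RCLike.ofReal ∘ Sum.elim 1 (-1)) * Cᴴ).IsHermitian :=
    isHermitian_mul_mul_conjTranspose _ (isHermitian_diagonal_iff.mpr fun i => RCLike.conj_ofReal _)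
  set U : Matrix (α ⊕ β) (α ⊕ β) 𝕜 := (hM.eigenvectorUnitary : Matrix (α ⊕ β) (α ⊕ β) 𝕜)
  set d := hM.eigenvalues
  have hU : U * diagonal (RCLike.ofReal ∘ d) * Uᴴ
      = C * diagonal (RCLike.ofReal ∘ Sum.elim 1 (-1)) * Cᴴ := by
    conv_rhs => rw [hM.spectral_theorem, Unitary.conjStarAlgAut_apply]
    rfl
  have hpos : Fintype.card α ≤ Fintype.card {i // 0 < d i} := by
    refine le_trans ?_ (card_pos_le_of_mul_diagonal_mul_conjTranspose_eq hC hU)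
    exact Fintype.card_le_of_injective (fun a => ⟨.inl a, by simp⟩)
      fun _ _ h => Sum.inl_injective (congrArg Subtype.val h)
  have hneg : Fintype.card β ≤ Fintype.card {i // d i < 0} := by
    refine le_trans ?_ (card_neg_le_of_mul_diagonal_mul_conjTranspose_eq hC hU)
    exact Fintype.card_le_of_injective (fun b => ⟨.inr b, by simp⟩)
      fun _ _ h => Sum.inr_injective (congrArg Subtype.val h)
  obtain ⟨σ, hσpos, hσneg⟩ := exists_sum_equiv_of_card_le (fun i => lt_asymm)
    (Fintype.card_sum ..) hpos hneg
  refine ⟨U.submatrix id σ, submatrix_id_mem_unitaryGroup hM.eigenvectorUnitary.2 σ, d ∘ σ, hσpos,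
    hσneg, ?_⟩
  rw [← hU, ← submatrix_id_mul_diagonal_mul_conjTranspose U _ σ]
  rfl

theorem exists_diagonal_mul_fromBlocks_mul_self_eq {μ : α ⊕ β → ℝ}
    (hpos : ∀ a, 0 < μ (.inl a)) (hneg : ∀ b, μ (.inr b) < 0) :
    ∃ G : Matrix (α ⊕ β) (α ⊕ β) 𝕜, Gᴴ = G ∧
      G * fromBlocks 1 0 0 (-1) * G = diagonal (RCLike.ofReal ∘ μ) ∧
      G * G = diagonal (RCLike.ofReal ∘ fun i => |μ i|) := by
  refine ⟨diagonal (RCLike.ofReal ∘ fun i => √|μ i|), ?_, ?_, ?_⟩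
  · rw [diagonal_conjTranspose]
    congr 1
    ext i
    exact RCLike.conj_ofReal _
  · rw [fromBlocks_one_zero_zero_neg_one, diagonal_mul_diagonal, diagonal_mul_diagonal]
    congr 1
    ext i
    simp only [Function.comp_apply, ← RCLike.ofReal_mul]
    congr 1
    rcases i with a | b
    · rw [Sum.elim_inl, Pi.one_apply, mul_one, Real.mul_self_sqrt (abs_nonneg _),
        abs_of_pos (hpos a)]
    · rw [Sum.elim_inr, Pi.neg_apply, Pi.one_apply, mul_neg_one, neg_mul,
        Real.mul_self_sqrt (abs_nonneg _), abs_of_neg (hneg b), neg_neg]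
  · rw [diagonal_mul_diagonal]
    congr 1
    ext i
    simp only [Function.comp_apply, ← RCLike.ofReal_mul, Real.mul_self_sqrt (abs_nonneg _)]

theorem PosDef.exists_simultaneous_diagonalization {A : Matrix (α ⊕ β) (α ⊕ β) 𝕜}
    (hA : A.PosDef) :
    ∃ Q : Matrix (α ⊕ β) (α ⊕ β) 𝕜, ∃ μ : α ⊕ β → ℝ,
      (∀ a, 0 < μ (.inl a)) ∧ (∀ b, μ (.inr b) < 0) ∧
      Q * diagonal (RCLike.ofReal ∘ μ) * Qᴴ = fromBlocks 1 0 0 (-1) ∧ Qᴴ * A * Q = 1 := by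
  obtain ⟨K, hK, rfl⟩ := hA.exists_isUnit_eq_conjTranspose_mul
  obtain ⟨V, hV, μ, hμpos, hμneg, hKV⟩ :=
    exists_unitary_diagonal_eq_mul_fromBlocks_mul_conjTranspose hK
  have hKdet := (isUnit_iff_isUnit_det K).mp hK
  refine ⟨K⁻¹ * V, μ, hμpos, hμneg, ?_, ?_⟩
  · calc K⁻¹ * V * diagonal (RCLike.ofReal ∘ μ) * (K⁻¹ * V)ᴴ
        = K⁻¹ * (V * diagonal (RCLike.ofReal ∘ μ) * Vᴴ) * K⁻¹ᴴ := by
          simp only [conjTranspose_mul, mul_assoc]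
      _ = (K⁻¹ * K) * fromBlocks 1 0 0 (-1) * (K⁻¹ * K)ᴴ := by
          rw [← hKV]
          simp only [conjTranspose_mul, mul_assoc]
      _ = fromBlocks 1 0 0 (-1) := by
          rw [nonsing_inv_mul _ hKdet, conjTranspose_one, one_mul, mul_one]
  · calc (K⁻¹ * V)ᴴ * (Kᴴ * K) * (K⁻¹ * V) = star V * (K * K⁻¹)ᴴ * (K * K⁻¹) * V := by
          simp only [conjTranspose_mul, star_eq_conjTranspose, mul_assoc]
      _ = 1 := by
          rw [mul_nonsing_inv _ hKdet, conjTranspose_one, mul_one, mul_one,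
            Unitary.star_mul_self_of_mem hV]

end Matrix

theorem colpa_paraunitary_diagonalization_of_posDef_general
    (N : ℕ)
    (η : Matrix (Fin N ⊕ Fin N) (Fin N ⊕ Fin N) ℂ)
    (hη : η = Matrix.fromBlocks 1 0 0 (-1))
    (H : Matrix (Fin N ⊕ Fin N) (Fin N ⊕ Fin N) ℂ)
    (hH : H.PosDef) :
    ∃ P : Matrix (Fin N ⊕ Fin N) (Fin N ⊕ Fin N) ℂ,
      P * η * Pᴴ = η ∧
      (Pᴴ * H * P).IsDiag ∧
      ∀ j, ∃ r : ℝ, 0 < r ∧ (Pᴴ * H * P) j j = (r : ℂ) := by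
  subst hη
  obtain ⟨Q, μ, hμpos, hμneg, hQη, hQH⟩ := hH.exists_simultaneous_diagonalization
  obtain ⟨G, hG, hGηG, hGG⟩ := exists_diagonal_mul_fromBlocks_mul_self_eq (𝕜 := ℂ) hμpos hμneg
  have hPηP : Q * G * fromBlocks 1 0 0 (-1) * (Q * G)ᴴ = fromBlocks 1 0 0 (-1) :=
    calc _ = Q * (G * fromBlocks 1 0 0 (-1) * G) * Qᴴ := by
          simp only [conjTranspose_mul, hG, mul_assoc]
      _ = _ := by rw [hGηG, hQη]
  have hPHP : (Q * G)ᴴ * H * (Q * G) = diagonal fun i => ((|μ i| : ℝ) : ℂ) :=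
    calc _ = G * (Qᴴ * H * Q) * G := by simp only [conjTranspose_mul, hG, mul_assoc]
      _ = _ := by rw [hQH, mul_one, hGG]; rfl
  have hμ : ∀ i, μ i ≠ 0
    | .inl a => (hμpos a).ne'
    | .inr b => (hμneg b).ne
  refine ⟨Q * G, hPηP, hPHP ▸ isDiag_diagonal _, fun j => ⟨|μ j|, abs_pos.mpr (hμ j), ?_⟩⟩
  rw [hPHP, diagonal_apply_eq]

/-- Colpa's para-unitary diagonalization theorem, 'if' direction: a Hermitian
positive definite `2N × 2N` matrix `H` can be para-unitarily diagonalized into a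
diagonal matrix with all diagonal entries real and strictly positive. -/
theorem colpa_paraunitary_diagonalization_of_posDef
    (N : ℕ) (hN : 0 < N)
    (η : Matrix (Fin N ⊕ Fin N) (Fin N ⊕ Fin N) ℂ)
    (hη : η = Matrix.fromBlocks 1 0 0 (-1))
    (H : Matrix (Fin N ⊕ Fin N) (Fin N ⊕ Fin N) ℂ)
    (hH : H.PosDef) :
    ∃ P : Matrix (Fin N ⊕ Fin N) (Fin N ⊕ Fin N) ℂ,
      P * η * Pᴴ = η ∧
      (Pᴴ * H * P).IsDiag ∧
      ∀ j, ∃ r : ℝ, 0 < r ∧ (Pᴴ * H * P) j j = (r : ℂ) :=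
  colpa_paraunitary_diagonalization_of_posDef_general N η hη H hH
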